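/- Let A ∈ ℝ^{n×d} (n, d ≥ 1), b ∈ ℝ^n, λ > 0, q > 0, and let Ψ_q, F_PAR, F_ridge be as follows: Ψ_q(x) = (k + 1/2)q(|x| − kq) + k²q²/2 with k = ⌊|x|/q⌋, F_PAR(x) = (1/(2n))‖Ax − b‖² + λΣ_{i=1}^d Ψ_q(x_i), F_ridge(x) = (1/(2n))‖Ax − b‖² + (λ/2)‖x‖². Let x_PAR be a global minimizer of F_PAR and x_ridge a global minimizer of F_ridge. Then for every x* ∈ ℝ^d, (1/n)‖A(x_PAR − x*)‖² ≤ dλq² + (2/n)‖A(x_ridge − x*)‖². -/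

import Mathlib

/-!
With `k = ⌊|x|/q⌋` and `r = |x| - kq ∈ [0, q)`, one has `Ψ_q(x) - x²/2 = r (q - r)/2`, which
lies in `[0, q²/8]`. Hence `F_ridge ≤ F_PAR ≤ F_ridge + dλq²/8`, so `x_PAR` minimizes
`F_ridge` up to `dλq²/8`. Since `F_ridge` is quadratic, the parallelogram identity at the
midpoint of `x_ridge` and `x_PAR`, together with the minimality of `x_ridge`, turns this gap
into `‖x_PAR - x_ridge‖²_Σ̂ ≤ dλq²/2`. The theorem follows from `(a + b)² ≤ 2a² + 2b²`.
-/

/-- The piecewise-affine regularizer with quantization values `Q = {0, ±q, ±2q, …}`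
that interpolates the quadratic `x²/2` at the grid points: with `k = ⌊|x|/q⌋`,
`Ψ_q(x) = (k + 1/2)·q·(|x| − kq) + k²q²/2`. -/
noncomputable def quadPAR (q : ℝ) (x : ℝ) : ℝ :=
  ((⌊|x| / q⌋₊ : ℝ) + 1 / 2) * q * (|x| - (⌊|x| / q⌋₊ : ℝ) * q) +
    (⌊|x| / q⌋₊ : ℝ) ^ 2 * q ^ 2 / 2

open Finset Matrix

section quadPAR

variable {q : ℝ}

lemma natFloor_abs_div_mul_le (hq : 0 < q) (x : ℝ) : (⌊|x| / q⌋₊ : ℝ) * q ≤ |x| :=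
  (le_div_iff₀ hq).1 (Nat.floor_le (by positivity))

lemma abs_lt_natFloor_abs_div_add_one_mul (hq : 0 < q) (x : ℝ) :
    |x| < ((⌊|x| / q⌋₊ : ℝ) + 1) * q :=
  (div_lt_iff₀ hq).1 (Nat.lt_floor_add_one _)

lemma quadPAR_sub_sq_div_two (q x : ℝ) :
    quadPAR q x - x ^ 2 / 2 =
      (|x| - ⌊|x| / q⌋₊ * q) * (q - (|x| - ⌊|x| / q⌋₊ * q)) / 2 := by
  rw [quadPAR, ← sq_abs x]
  ring

lemma sq_div_two_le_quadPAR (hq : 0 < q) (x : ℝ) : x ^ 2 / 2 ≤ quadPAR q x := by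
  have h := quadPAR_sub_sq_div_two q x
  have h₀ := natFloor_abs_div_mul_le hq x
  have h₁ := abs_lt_natFloor_abs_div_add_one_mul hq x
  nlinarith

lemma quadPAR_le_sq_div_two_add (q x : ℝ) : quadPAR q x ≤ x ^ 2 / 2 + q ^ 2 / 8 := by
  have h := quadPAR_sub_sq_div_two q x
  nlinarith [sq_nonneg (|x| - ⌊|x| / q⌋₊ * q - q / 2)]

end quadPAR

variable {ι m : Type*} [Fintype ι] [Fintype m]

lemma sum_sq_div_two_le_sum_quadPAR {q : ℝ} (hq : 0 < q) (x : ι → ℝ) :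
    (∑ i, x i ^ 2) / 2 ≤ ∑ i, quadPAR q (x i) := by
  rw [sum_div]
  exact sum_le_sum fun i _ ↦ sq_div_two_le_quadPAR hq (x i)

lemma sum_quadPAR_le (q : ℝ) (x : ι → ℝ) :
    ∑ i, quadPAR q (x i) ≤ (∑ i, x i ^ 2) / 2 + Fintype.card ι * (q ^ 2 / 8) := by
  calc ∑ i, quadPAR q (x i) ≤ ∑ i, (x i ^ 2 / 2 + q ^ 2 / 8) :=
        sum_le_sum fun i _ ↦ quadPAR_le_sq_div_two_add q (x i)
    _ = (∑ i, x i ^ 2) / 2 + Fintype.card ι * (q ^ 2 / 8) := by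
        rw [sum_add_distrib, ← sum_div, sum_const, card_univ, nsmul_eq_mul]

lemma apply_le_apply_add_of_le_of_le_add {α : Type*} {f g : α → ℝ} {ε : ℝ}
    (hgf : ∀ x, g x ≤ f x) (hfg : ∀ x, f x ≤ g x + ε)
    {x₀ : α} (hx₀ : ∀ y, f x₀ ≤ f y) (y : α) : g x₀ ≤ g y + ε :=
  (hgf x₀).trans ((hx₀ y).trans (hfg y))

lemma sum_sq_add_le (u w : ι → ℝ) :
    ∑ i, (u i + w i) ^ 2 ≤ 2 * ∑ i, u i ^ 2 + 2 * ∑ i, w i ^ 2 := by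
  rw [mul_sum, mul_sum, ← sum_add_distrib]
  exact sum_le_sum fun i _ ↦ add_sq_le.trans_eq (mul_add _ _ _)

lemma sum_sq_add_sum_sq_eq_midpoint (u w : ι → ℝ) :
    ∑ i, u i ^ 2 + ∑ i, w i ^ 2 =
      2 * ∑ i, (2⁻¹ * (u i + w i)) ^ 2 + (∑ i, (w i - u i) ^ 2) / 2 := by
  rw [mul_sum, sum_div, ← sum_add_distrib, ← sum_add_distrib]
  exact sum_congr rfl fun i _ ↦ by ring

section Ridge

variable {F : (ι → ℝ) → ℝ} {A : Matrix m ι ℝ} {b : m → ℝ} {c μ : ℝ}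

lemma quadratic_add_eq_midpoint
    (hF : ∀ x, F x = c * ∑ i, ((A *ᵥ x) i - b i) ^ 2 + μ * ∑ i, x i ^ 2)
    (x y : ι → ℝ) :
    F x + F y = 2 * F ((2⁻¹ : ℝ) • (x + y)) +
      c / 2 * ∑ i, ((A *ᵥ (y - x)) i) ^ 2 + μ / 2 * ∑ i, (y - x) i ^ 2 := by
  have hres :=
    sum_sq_add_sum_sq_eq_midpoint (fun i ↦ (A *ᵥ x) i - b i) (fun i ↦ (A *ᵥ y) i - b i)
  have hvar := sum_sq_add_sum_sq_eq_midpoint x y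
  simp only [hF, mulVec_smul, mulVec_add, mulVec_sub, Pi.add_apply, Pi.sub_apply,
    Pi.smul_apply, smul_eq_mul] at hres hvar ⊢
  have hmid : ∀ i, 2⁻¹ * ((A *ᵥ x) i + (A *ᵥ y) i) - b i =
      2⁻¹ * ((A *ᵥ x) i - b i + ((A *ᵥ y) i - b i)) :=
    fun i ↦ by ring
  have hdiff : ∀ i, (A *ᵥ y) i - (A *ᵥ x) i = (A *ᵥ y) i - b i - ((A *ᵥ x) i - b i) :=
    fun i ↦ by ring
  simp only [hmid, hdiff]
  linear_combination c * hres + μ * hvar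

lemma half_mul_sum_sq_mulVec_sub_le_sub (hμ : 0 ≤ μ)
    (hF : ∀ x, F x = c * ∑ i, ((A *ᵥ x) i - b i) ^ 2 + μ * ∑ i, x i ^ 2)
    {x₀ : ι → ℝ} (hx₀ : ∀ y, F x₀ ≤ F y) (y : ι → ℝ) :
    c / 2 * ∑ i, ((A *ᵥ (y - x₀)) i) ^ 2 ≤ F y - F x₀ := by
  have hmid := quadratic_add_eq_midpoint hF x₀ y
  have hmin := hx₀ ((2⁻¹ : ℝ) • (x₀ + y))
  have hvar : 0 ≤ μ / 2 * ∑ i, (y - x₀) i ^ 2 := by positivity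
  linarith

end Ridge

theorem par_excess_risk_combination
    (n d : ℕ)
    (A : Matrix (Fin n) (Fin d) ℝ) (b : Fin n → ℝ)
    (lam : ℝ) (hlam : 0 < lam) (q : ℝ) (hq : 0 < q)
    (FPAR Fridge : (Fin d → ℝ) → ℝ)
    (hFPAR : ∀ x, FPAR x =
      (1 / (2 * n)) * ∑ i, (A.mulVec x i - b i) ^ 2 + lam * ∑ i, quadPAR q (x i))
    (hFridge : ∀ x, Fridge x =
      (1 / (2 * n)) * ∑ i, (A.mulVec x i - b i) ^ 2 + (lam / 2) * ∑ i, (x i) ^ 2)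
    (xPAR : Fin d → ℝ) (hxPAR : ∀ y, FPAR xPAR ≤ FPAR y)
    (xridge : Fin d → ℝ) (hxridge : ∀ y, Fridge xridge ≤ Fridge y) :
    ∀ xstar : Fin d → ℝ,
      (1 / n) * ∑ i, (A.mulVec (xPAR - xstar) i) ^ 2 ≤
        (d : ℝ) * lam * q ^ 2 + (2 / n) * ∑ i, (A.mulVec (xridge - xstar) i) ^ 2 := by
  intro xstar
  have hridge_le : ∀ x, Fridge x ≤ FPAR x := fun x ↦ by
    have := mul_le_mul_of_nonneg_left (sum_sq_div_two_le_sum_quadPAR hq x) hlam.le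
    rw [hFridge, hFPAR]
    linarith
  have hle_ridge : ∀ x, FPAR x ≤ Fridge x + d * lam * q ^ 2 / 8 := fun x ↦ by
    have := mul_le_mul_of_nonneg_left (sum_quadPAR_le q x) hlam.le
    rw [Fintype.card_fin] at this
    rw [hFridge, hFPAR]
    linarith
  have hgap := apply_le_apply_add_of_le_of_le_add hridge_le hle_ridge hxPAR xridge
  have hdist := half_mul_sum_sq_mulVec_sub_le_sub (by positivity) hFridge hxridge xPAR
  have hsplit : A *ᵥ (xPAR - xstar) = A *ᵥ (xPAR - xridge) + A *ᵥ (xridge - xstar) := by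
    rw [← mulVec_add, sub_add_sub_cancel]
  calc (1 / n : ℝ) * ∑ i, ((A *ᵥ (xPAR - xstar)) i) ^ 2
      ≤ 1 / n * (2 * ∑ i, ((A *ᵥ (xPAR - xridge)) i) ^ 2 +
          2 * ∑ i, ((A *ᵥ (xridge - xstar)) i) ^ 2) := by
        rw [hsplit]
        gcongr
        exact sum_sq_add_le _ _
    _ = 8 * (1 / (2 * n) / 2 * ∑ i, ((A *ᵥ (xPAR - xridge)) i) ^ 2) +
          2 / n * ∑ i, ((A *ᵥ (xridge - xstar)) i) ^ 2 := by ring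
    _ ≤ d * lam * q ^ 2 + 2 / n * ∑ i, ((A *ᵥ (xridge - xstar)) i) ^ 2 := by linarith
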